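/- Let Γ be a discrete abelian group, N ≥ 1 an integer, E ⊆ Γ an N-PR set, and γ ∈ Γ an element such that the subgroup generated by E intersects the cyclic subgroup generated by γ only in the identity. Then the translated set γE = {γδ : δ ∈ E} is also N-PR. -/
import Mathlib


open scoped DirectSum

/-- A subset `E` of a discrete abelian group `Γ` is `N`-PR (`N`-pseudo-Rademacher) if every
function `φ : E → 𝕋` taking values in the `N`-th roots of unity is the restriction of a
character of `Γ`. -/
def IsNPR {Γ : Type*} [CommGroup Γ] (N : ℕ) (E : Set Γ) : Prop :=
  ∀ φ : Γ → Circle, (∀ γ ∈ E, φ γ ^ N = 1) →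
    ∃ χ : Γ →* Circle, ∀ γ ∈ E, χ γ = φ γ

noncomputable instance : DivisibleBy (Additive Circle) ℤ where
  div a n := if n = 0 then 0 else Circle.expHom (Complex.arg (a.toMul : ℂ) / n)
  div_zero a := if_pos rfl
  div_cancel {n} a hn := by
    simp only [if_neg hn]
    rw [← map_zsmul Circle.expHom, zsmul_eq_mul,
      mul_div_cancel₀ _ (Int.cast_ne_zero.mpr hn : (n : ℝ) ≠ 0)]
    show Additive.ofMul (Circle.exp (Complex.arg (a.toMul : ℂ))) = a
    rw [Circle.exp_arg]
    rfl

/-- Any character on a subgroup of a commutative group extends to the whole group, since the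
circle group is divisible. -/
theorem Subgroup.exists_character_extension {Γ : Type*} [CommGroup Γ] (H : Subgroup Γ)
    (f : H →* Circle) : ∃ g : Γ →* Circle, ∀ x : H, g x = f x := by
  have hinj : Function.Injective (MonoidHom.toAdditive H.subtype) := by
    intro x y hxy
    exact Subtype.ext (congrArg Additive.toMul hxy)
  obtain ⟨g', hg'⟩ := (Module.Baer.of_divisible (Additive Circle)).extension_property_addMonoidHom
    (MonoidHom.toAdditive H.subtype) hinj (MonoidHom.toAdditive f)
  refine ⟨MonoidHom.toAdditive.symm g', fun x => ?_⟩
  have := DFunLike.congr_fun hg' (Additive.ofMul x)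
  exact congrArg Additive.toMul this

/-- If `E` is `N`-PR and `⟨E⟩ ∩ ⟨γ⟩ = {1}`, then the translate `γE` is also `N`-PR. -/
theorem translate_nPR {Γ : Type*} [CommGroup Γ] (N : ℕ) (hN : 1 ≤ N) (E : Set Γ)
    (γ : Γ) (hE : IsNPR N E)
    (h : Subgroup.closure E ⊓ Subgroup.zpowers γ = ⊥) :
    IsNPR N ((fun δ => γ * δ) '' E) := by
  intro φ hφ
  set A := Subgroup.closure E with hA
  set B := Subgroup.zpowers γ with hB
  set H := A ⊔ B with hH
  -- apply the hypothesis to the translated function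
  obtain ⟨χ, hχ⟩ := hE (fun δ => φ (γ * δ)) (fun δ hδ => hφ _ ⟨δ, hδ, rfl⟩)
  -- uniqueness of decompositions in A ⊔ B
  have uniq : ∀ (a₁ : A) (b₁ : B) (a₂ : A) (b₂ : B),
      (a₁ : Γ) * b₁ = (a₂ : Γ) * b₂ → (a₁ : Γ) = a₂ := by
    intro a₁ b₁ a₂ b₂ heq
    have h1 : ((a₂ : Γ)⁻¹ * a₁) ∈ A := mul_mem (inv_mem a₂.2) a₁.2
    have heq2 : ((a₂ : Γ)⁻¹ * a₁) = (b₂ : Γ) * (b₁ : Γ)⁻¹ := by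
      rw [inv_mul_eq_iff_eq_mul, ← mul_assoc, ← heq, mul_assoc]
      simp
    have h2 : ((a₂ : Γ)⁻¹ * a₁) ∈ B := heq2 ▸ mul_mem b₂.2 (inv_mem b₁.2)
    have : ((a₂ : Γ)⁻¹ * a₁) ∈ A ⊓ B := ⟨h1, h2⟩
    rw [h, Subgroup.mem_bot] at this
    rw [inv_mul_eq_one] at this
    exact this.symm
  -- decompose each element of H
  have exdec : ∀ x : H, ∃ a : A, ∃ b : B, (a : Γ) * b = x := by
    intro x
    obtain ⟨a, ha, b, hb, hab⟩ := Subgroup.mem_sup.mp x.2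
    exact ⟨⟨a, ha⟩, ⟨b, hb⟩, hab⟩
  choose a b hab using exdec
  -- define the character on H
  have hamul : ∀ x y : H, (a (x * y) : Γ) = a x * a y := by
    intro x y
    refine uniq _ (b (x * y)) ⟨(a x : Γ) * a y, mul_mem (a x).2 (a y).2⟩
      ⟨(b x : Γ) * b y, mul_mem (b x).2 (b y).2⟩ ?_
    rw [hab (x * y)]
    push_cast
    rw [mul_mul_mul_comm, hab x, hab y]
  have hone : (a 1 : Γ) = 1 := by
    refine uniq _ (b 1) ⟨1, one_mem _⟩ ⟨1, one_mem _⟩ ?_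
    rw [hab 1]
    simp
  let f : H →* Circle :=
    { toFun := fun x => χ (a x)
      map_one' := by show χ ((a 1 : Γ)) = 1; rw [hone, map_one]
      map_mul' := fun x y => by
        show χ ((a (x * y) : Γ)) = χ ((a x : Γ)) * χ ((a y : Γ))
        rw [hamul x y, map_mul] }
  obtain ⟨g, hg⟩ := Subgroup.exists_character_extension H f
  refine ⟨g, ?_⟩
  rintro _ ⟨δ, hδ, rfl⟩
  have hδA : δ ∈ A := Subgroup.subset_closure hδ
  have hγB : γ ∈ B := Subgroup.mem_zpowers γ
  have hδH : δ ∈ H := Subgroup.mem_sup_left hδA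
  have hγH : γ ∈ H := Subgroup.mem_sup_right hγB
  have hgγ : g γ = 1 := by
    have : g γ = f ⟨γ, hγH⟩ := hg ⟨γ, hγH⟩
    rw [this]
    show χ (a ⟨γ, hγH⟩) = 1
    have : (a ⟨γ, hγH⟩ : Γ) = ((⟨1, one_mem _⟩ : A) : Γ) :=
      uniq _ (b ⟨γ, hγH⟩) ⟨1, one_mem _⟩ ⟨γ, hγB⟩ (by rw [hab]; simp)
    rw [this]
    simp
  have hgδ : g δ = φ (γ * δ) := by
    have : g δ = f ⟨δ, hδH⟩ := hg ⟨δ, hδH⟩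
    rw [this]
    show χ (a ⟨δ, hδH⟩) = _
    have : (a ⟨δ, hδH⟩ : Γ) = ((⟨δ, hδA⟩ : A) : Γ) :=
      uniq _ (b ⟨δ, hδH⟩) ⟨δ, hδA⟩ ⟨1, one_mem _⟩ (by rw [hab]; simp)
    rw [this]
    exact hχ δ hδ
  rw [map_mul, hgγ, hgδ, one_mul]
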